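/- Fix positive reals ν_a, ν_o, h_a, h_o, α_c, ε and θ ∈ ℝ. For real t ≠ 0 define χ_j(t) = i·t·h_j²/ν_j, λ_j(t) = (χ_j(t) − √(χ_j(t))·√(χ_j(t)+4))/2 (principal complex square root, j ∈ {a,o}), and the convergence factor ξ(t) = |((1−θ) + ε·h_a·λ_o(t)/(h_o·λ_a(t))) / (ν_a·χ_a(t)/(α_c·h_a·λ_a(t)) − θ)|. Then ξ(t) tends to 0 as |t| → ∞ (both as t → +∞ and as t → −∞). -/

import Mathlib

open Filter Topology
open Complex

/-- Principal complex square root. -/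
noncomputable def csqrt (z : ℂ) : ℂ := z ^ ((1 : ℂ) / 2)

/-- `λ(χ) = (χ − √χ·√(χ+4))/2`. -/
noncomputable def lamM (χ : ℂ) : ℂ := (χ - csqrt χ * csqrt (χ + 4)) / 2

/-- `χ_j(t) = i·t·h_j²/ν_j`. -/
noncomputable def chi (h ν t : ℝ) : ℂ := Complex.I * t * (h : ℂ) ^ 2 / (ν : ℂ)

notation "cabs" => (Norm.norm : ℂ → ℝ)

/-- The SWR convergence factor with linear friction
`ξ(t) = |((1−θ) + ε·h_a·λ_o/(h_o·λ_a)) / (ν_a·χ_a/(α_c·h_a·λ_a) − θ)|`. -/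
noncomputable def xi (νa νo ha ho αc ε θ : ℝ) (t : ℝ) : ℝ :=
  Norm.norm (((1 - (θ : ℂ)) + (ε : ℂ) * (ha : ℂ) * lamM (chi ho νo t)
      / ((ho : ℂ) * lamM (chi ha νa t)))
    / ((νa : ℂ) * chi ha νa t / ((αc : ℂ) * (ha : ℂ) * lamM (chi ha νa t)) - (θ : ℂ)))


lemma csqrt_sq {z : ℂ} (hz : z ≠ 0) : csqrt z * csqrt z = z := by
  rw [csqrt, ← cpow_add _ _ hz]; norm_num

lemma abs_csqrt (z : ℂ) : cabs (csqrt z) = cabs z ^ ((1:ℝ)/2) := by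
  rw [csqrt, show ((1:ℂ)/2) = (((1:ℝ)/2 : ℝ) : ℂ) by norm_num, norm_cpow_real]

lemma csqrt_log_im {z : ℂ} (hz : z ≠ 0) :
    csqrt z = Complex.exp (Complex.log z * ((1:ℂ)/2)) := by
  rw [csqrt, cpow_def_of_ne_zero hz]

lemma im_aux (z : ℂ) : ((Complex.log z) * ((1:ℂ)/2)).im = z.arg / 2 := by
  simp [Complex.mul_im, Complex.log_im, Complex.log_re]; ring

lemma csqrt_re_nonneg (z : ℂ) : 0 ≤ (csqrt z).re := by
  rcases eq_or_ne z 0 with rfl | hz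
  · simp [csqrt, zero_cpow (by norm_num : ((1:ℂ)/2) ≠ 0)]
  · rw [csqrt_log_im hz, exp_re, im_aux]
    have h1 := Complex.neg_pi_lt_arg z
    have h2 := Complex.arg_le_pi z
    have hpi := Real.pi_pos
    exact mul_nonneg (Real.exp_pos _).le
      (Real.cos_nonneg_of_mem_Icc ⟨by linarith, by linarith⟩)

lemma csqrt_im_nonneg {z : ℂ} (hz : 0 ≤ z.im) : 0 ≤ (csqrt z).im := by
  rcases eq_or_ne z 0 with rfl | hz0
  · simp [csqrt, zero_cpow (by norm_num : ((1:ℂ)/2) ≠ 0)]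
  · rw [csqrt_log_im hz0, exp_im, im_aux]
    have h1 : 0 ≤ z.arg := Complex.arg_nonneg_iff.mpr hz
    have h2 := Complex.arg_le_pi z
    exact mul_nonneg (Real.exp_pos _).le
      (Real.sin_nonneg_of_nonneg_of_le_pi (by linarith) (by linarith))

lemma csqrt_im_nonpos {z : ℂ} (hz : z.im ≤ 0) (hre : 0 < z.re) : (csqrt z).im ≤ 0 := by
  have hz0 : z ≠ 0 := by intro h; rw [h] at hre; simp at hre
  rw [csqrt_log_im hz0, exp_im, im_aux]
  have h1 : z.arg ≤ 0 := by
    rcases lt_or_eq_of_le hz with h | h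
    · exact (Complex.arg_neg_iff.mpr h).le
    · rw [Complex.arg_eq_zero_iff.mpr ⟨hre.le, h⟩]
  have h2 := Complex.neg_pi_lt_arg z
  have hpi := Real.pi_pos
  apply mul_nonpos_of_nonneg_of_nonpos (Real.exp_pos _).le
  apply Real.sin_nonpos_of_nonpos_of_neg_pi_le (by linarith) (by linarith)

lemma sq_abs_csqrt (z : ℂ) : cabs (csqrt z) ^ 2 = cabs z := by
  rw [abs_csqrt, ← Real.rpow_natCast (cabs z ^ ((1:ℝ)/2)) 2,
    ← Real.rpow_mul (norm_nonneg z)]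
  norm_num

lemma csqrt_im_nonpos' {z : ℂ} (hz : z.im < 0) : (csqrt z).im ≤ 0 := by
  have hz0 : z ≠ 0 := by intro h; rw [h] at hz; simp at hz
  rw [csqrt_log_im hz0, exp_im, im_aux]
  have h1 : z.arg < 0 := Complex.arg_neg_iff.mpr hz
  have h2 := Complex.neg_pi_lt_arg z
  have hpi := Real.pi_pos
  apply mul_nonpos_of_nonneg_of_nonpos (Real.exp_pos _).le
  apply Real.sin_nonpos_of_nonpos_of_neg_pi_le (by linarith) (by linarith)

lemma lam_bounds {y : ℝ} (hy4 : 4 ≤ |y|) :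
    1/2 ≤ cabs (lamM (Complex.I * y)) ∧ cabs (lamM (Complex.I * y)) ≤ 2 := by
  have hy : y ≠ 0 := by intro h; rw [h] at hy4; simp at hy4; linarith
  set χ : ℂ := Complex.I * y with hχ
  have hχ0 : χ ≠ 0 := by
    simp [hχ, Complex.ext_iff, Complex.I_ne_zero, hy]
  have hχ4 : χ + 4 ≠ 0 := by
    intro h
    have : (χ + 4).im = 0 := by rw [h]; simp
    simp [hχ] at this; exact hy this
  set b : ℂ := csqrt χ with hb
  set a : ℂ := csqrt (χ + 4) with ha
  have hbb : b * b = χ := csqrt_sq hχ0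
  have haa : a * a = χ + 4 := csqrt_sq hχ4
  -- im components
  have himχ : χ.im = y := by simp [hχ]
  have himχ4 : (χ + 4).im = y := by simp [hχ]
  have cross : 0 ≤ a.re * b.re + a.im * b.im := by
    have h1 := csqrt_re_nonneg χ
    have h2 := csqrt_re_nonneg (χ + 4)
    rcases lt_or_gt_of_ne hy with h | h
    · have := csqrt_im_nonpos' (himχ ▸ h : χ.im < 0)
      have := csqrt_im_nonpos' (himχ4 ▸ h : (χ+4).im < 0)
      nlinarith [mul_nonneg h2 h1]
    · have := csqrt_im_nonneg (le_of_lt (himχ ▸ h : (0:ℝ) < χ.im))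
      have := csqrt_im_nonneg (le_of_lt (himχ4 ▸ h : (0:ℝ) < (χ+4).im))
      nlinarith [mul_nonneg h2 h1]
  -- abs values
  have habχ : cabs χ = |y| := by
    rw [hχ, norm_mul, Complex.norm_I, Complex.norm_real, Real.norm_eq_abs, one_mul]
  have hb2 : cabs b ^ 2 = |y| := by rw [hb, sq_abs_csqrt, habχ]
  have ha2 : cabs a ^ 2 = cabs (χ + 4) := sq_abs_csqrt _
  have ha2le : cabs a ^ 2 ≤ 2 * cabs b ^ 2 := by
    rw [ha2, hb2]
    calc cabs (χ + 4) ≤ cabs χ + cabs 4 := norm_add_le _ _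
    _ ≤ |y| + 4 := by rw [habχ]; norm_num
    _ ≤ 2 * |y| := by linarith
  have hbpos : 0 < cabs b := by
    rcases (norm_nonneg b).lt_or_eq with h | h
    · exact h
    · exfalso; rw [← h] at hb2; simp at hb2; linarith
  have hsum2 : cabs (a + b) ^ 2
      = cabs a ^ 2 + cabs b ^ 2 + 2 * (a.re * b.re + a.im * b.im) := by
    rw [Complex.sq_norm, Complex.sq_norm, Complex.sq_norm, Complex.normSq_add]
    simp [Complex.mul_re]
  have hSnn : 0 ≤ cabs (a + b) := norm_nonneg _
  have hann : 0 ≤ cabs a := norm_nonneg _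
  have hble : cabs b ≤ cabs (a + b) := by nlinarith
  have haleb : cabs a ≤ (3/2) * cabs b := by nlinarith
  have hsle : cabs (a + b) ≤ (5/2) * cabs b := by
    calc cabs (a + b) ≤ cabs a + cabs b := norm_add_le _ _
    _ ≤ (5/2) * cabs b := by linarith
  have hdiff : (b - a) * (b + a) = -4 := by linear_combination hbb - haa
  have habdiff : cabs (b - a) * cabs (a + b) = 4 := by
    rw [← norm_mul, show (b - a) * (a + b) = (b - a) * (b + a) by ring, hdiff]
    simp
  have hlam : lamM χ = b * (b - a) / 2 := by
    rw [lamM, ← hb, ← ha, ← hbb]; ring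
  have hval : cabs (lamM χ) = cabs b * cabs (b - a) / 2 := by
    rw [hlam, norm_div, norm_mul]; simp
  have hDnn : 0 ≤ cabs (b - a) := norm_nonneg _
  constructor
  · rw [hval]; nlinarith
  · rw [hval]; nlinarith

lemma chi_eq (h ν t : ℝ) : chi h ν t = Complex.I * ((t * h^2 / ν : ℝ) : ℂ) := by
  rw [chi]; push_cast; ring

lemma abs_aux {h ν t : ℝ} (hh : 0 < h) (hν : 0 < ν) :
    |t * h^2 / ν| = |t| * h^2 / ν := by
  rw [abs_div, abs_mul, abs_of_pos hν, abs_of_pos (pow_pos hh 2)]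

/-- The convergence factor tends to `0` as `|t| → ∞`
(both as `t → +∞` and as `t → −∞`). -/
theorem xi_high_frequency_limit
    (νa νo ha ho αc ε θ : ℝ)
    (hνa : 0 < νa) (hνo : 0 < νo) (hha : 0 < ha) (hho : 0 < ho)
    (hαc : 0 < αc) (hε : 0 < ε) :
    Tendsto (xi νa νo ha ho αc ε θ) atTop (𝓝 0) ∧
    Tendsto (xi νa νo ha ho αc ε θ) atBot (𝓝 0) := by
  set M : ℝ := |1 - θ| + 4 * ε * ha / ho with hM
  have hM0 : 0 ≤ M := by positivity
  set C : ℝ := 4 * αc * M / ha with hC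
  set T : ℝ := max (max (4 * νa / ha^2) (4 * νo / ho^2)) (4 * αc * (|θ| + 1) / ha) with hT
  have hTpos : 0 < T := lt_of_lt_of_le (by positivity) (le_max_right _ _)
  have key : ∀ t : ℝ, T ≤ |t| → xi νa νo ha ho αc ε θ t ≤ C / |t| := by
    intro t ht
    have htpos : 0 < |t| := lt_of_lt_of_le hTpos ht
    -- bounds on lamM values
    have hya : 4 ≤ |t * ha^2 / νa| := by
      rw [abs_aux hha hνa]
      have h1 : 4 * νa / ha^2 ≤ |t| := le_trans (le_trans (le_max_left _ _) (le_max_left _ _)) ht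
      rw [div_le_iff₀ (by positivity)] at h1
      rw [le_div_iff₀ hνa]; linarith
    have hyo : 4 ≤ |t * ho^2 / νo| := by
      rw [abs_aux hho hνo]
      have h1 : 4 * νo / ho^2 ≤ |t| := le_trans (le_trans (le_max_right _ _) (le_max_left _ _)) ht
      rw [div_le_iff₀ (by positivity)] at h1
      rw [le_div_iff₀ hνo]; linarith
    obtain ⟨hla1, hla2⟩ := lam_bounds hya
    obtain ⟨hlo1, hlo2⟩ := lam_bounds hyo
    rw [← chi_eq] at hla1 hla2 hlo1 hlo2
    set La := lamM (chi ha νa t) with hLa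
    set Lo := lamM (chi ho νo t) with hLo
    have hLapos : 0 < cabs La := lt_of_lt_of_le (by norm_num) hla1
    -- numerator bound
    have hnum : cabs ((1 - (θ : ℂ)) + (ε : ℂ) * (ha : ℂ) * Lo / ((ho : ℂ) * La)) ≤ M := by
      calc cabs ((1 - (θ : ℂ)) + (ε : ℂ) * (ha : ℂ) * Lo / ((ho : ℂ) * La))
          ≤ cabs (1 - (θ : ℂ)) + cabs ((ε : ℂ) * (ha : ℂ) * Lo / ((ho : ℂ) * La)) :=
            norm_add_le _ _
        _ ≤ M := by
            rw [hM]
            have h1 : cabs (1 - (θ : ℂ)) = |1 - θ| := by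
              rw [show (1 : ℂ) - (θ:ℂ) = ((1 - θ : ℝ) : ℂ) by push_cast; ring, Complex.norm_real, Real.norm_eq_abs]
            have h2 : cabs ((ε : ℂ) * (ha : ℂ) * Lo / ((ho : ℂ) * La))
                = ε * ha * cabs Lo / (ho * cabs La) := by
              rw [norm_div, norm_mul, norm_mul, norm_mul, Complex.norm_real, Real.norm_eq_abs, Complex.norm_real, Real.norm_eq_abs,
                Complex.norm_real, Real.norm_eq_abs, abs_of_pos hε, abs_of_pos hha, abs_of_pos hho]
            rw [h1, h2]
            have h3 : ε * ha * cabs Lo / (ho * cabs La) ≤ 4 * ε * ha / ho := by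
              rw [div_le_div_iff₀ (by positivity) hho]
              nlinarith [mul_nonneg (mul_nonneg (mul_nonneg hε.le hha.le) hho.le)
                (by linarith : (0:ℝ) ≤ 4 * cabs La - cabs Lo)]
            linarith
    -- denominator bound
    have habschia : cabs (chi ha νa t) = |t| * ha^2 / νa := by
      rw [chi_eq, norm_mul, Complex.norm_I, one_mul, Complex.norm_real, Real.norm_eq_abs, abs_aux hha hνa]
    have hdenfrac : cabs ((νa : ℂ) * chi ha νa t / ((αc : ℂ) * (ha : ℂ) * La))
        = νa * (|t| * ha^2 / νa) / (αc * ha * cabs La) := by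
      rw [norm_div, norm_mul, norm_mul, norm_mul, Complex.norm_real, Real.norm_eq_abs, Complex.norm_real, Real.norm_eq_abs,
        Complex.norm_real, Real.norm_eq_abs, abs_of_pos hνa, abs_of_pos hαc, abs_of_pos hha, habschia]
    have hd1 : |t| * ha / (4 * αc)
        ≤ cabs ((νa : ℂ) * chi ha νa t / ((αc : ℂ) * (ha : ℂ) * La) - (θ : ℂ)) := by
      have htri := norm_add_le
        ((νa : ℂ) * chi ha νa t / ((αc : ℂ) * (ha : ℂ) * La) - (θ : ℂ)) ((θ : ℂ))
      rw [sub_add_cancel] at htri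
      rw [hdenfrac, Complex.norm_real, Real.norm_eq_abs] at htri
      have hfr : |t| * ha / (2 * αc) ≤ νa * (|t| * ha^2 / νa) / (αc * ha * cabs La) := by
        rw [div_le_div_iff₀ (by positivity) (by positivity)]
        have : νa * (|t| * ha ^ 2 / νa) = |t| * ha^2 := by field_simp
        rw [this]
        nlinarith [mul_nonneg (mul_nonneg (abs_nonneg t) (mul_nonneg (pow_pos hha 2).le hαc.le))
          (by linarith : (0:ℝ) ≤ 2 - cabs La)]
      have hθT : |θ| + 1 ≤ |t| * ha / (4 * αc) := by
        have h1 : 4 * αc * (|θ| + 1) / ha ≤ |t| := le_trans (le_max_right _ _) ht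
        rw [div_le_iff₀ hha] at h1
        rw [le_div_iff₀ (by positivity)]
        linarith
      have h2eq : |t| * ha / (2 * αc) = 2 * (|t| * ha / (4 * αc)) := by ring
      linarith
    have hdpos : 0 < |t| * ha / (4 * αc) := by positivity
    rw [xi, norm_div]
    calc cabs ((1 - (θ : ℂ)) + (ε : ℂ) * (ha : ℂ) * Lo / ((ho : ℂ) * La))
          / cabs ((νa : ℂ) * chi ha νa t / ((αc : ℂ) * (ha : ℂ) * La) - (θ : ℂ))
        ≤ M / (|t| * ha / (4 * αc)) := div_le_div₀ hM0 hnum hdpos hd1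
      _ = C / |t| := by rw [hC]; field_simp
  have hle : ∀ t : ℝ, T ≤ |t| → xi νa νo ha ho αc ε θ t ≤ C / |t| := key
  have hnn : ∀ t : ℝ, 0 ≤ xi νa νo ha ho αc ε θ t := fun t => norm_nonneg _
  constructor
  · apply squeeze_zero' (Eventually.of_forall hnn)
      (eventually_atTop.mpr ⟨T, fun t h => hle t (le_trans h (le_abs_self t))⟩)
    exact Tendsto.div_atTop tendsto_const_nhds tendsto_abs_atTop_atTop
  · apply squeeze_zero' (Eventually.of_forall hnn)
      (eventually_atBot.mpr ⟨-T, fun t h => hle t (by rw [abs_of_nonpos (by linarith [hTpos])]; linarith)⟩)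
    exact Tendsto.div_atTop tendsto_const_nhds tendsto_abs_atBot_atTop
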